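/- arXiv:2404.00084 — 3 statements merged into one kernel-verified Lean document; each statement's English description precedes it below -/
import Mathlib

section
/- Let f : {−1,1}^n → {−1,1} be a Boolean function, S ⊆ [n] be non-empty and r = |S|. Then P(∂_S f ≠ 0) ≥ Inf_S(f) ≥ 2^{−(2r−2)} · P(∂_S f ≠ 0), where the probability is over a uniformly random input. -/
open Finset MeasureTheory
open scoped BigOperators Classical

/-- Expectation over the uniform measure on the hypercube `{-1,1}^n` (coded by `Bool`). -/
noncomputable def expectation {n : ℕ} (f : (Fin n → Bool) → ℝ) : ℝ :=
  (∑ x : Fin n → Bool, f x) / 2 ^ n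

/-- Probability of an event under the uniform measure on the hypercube. -/
noncomputable def pr {n : ℕ} (P : (Fin n → Bool) → Prop) : ℝ :=
  expectation (fun x => if P x then (1 : ℝ) else 0)

/-- Walsh function `χ_S`. -/
noncomputable def walsh {n : ℕ} (S : Finset (Fin n)) (x : Fin n → Bool) : ℝ :=
  ∏ j ∈ S, (if x j then (1 : ℝ) else -1)

/-- Fourier--Walsh coefficient `f̂(S)`. -/
noncomputable def fwCoeff {n : ℕ} (f : (Fin n → Bool) → ℝ) (S : Finset (Fin n)) : ℝ :=
  expectation (fun x => f x * walsh S x)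

/-- T-influence `Inf_S(f) = ∑_{T ⊇ S} f̂(T)^2`. -/
noncomputable def TInf {n : ℕ} (f : (Fin n → Bool) → ℝ) (S : Finset (Fin n)) : ℝ :=
  ∑ T ∈ Finset.univ.filter (fun T : Finset (Fin n) => S ⊆ T), fwCoeff f T ^ 2

/-- Fourier weight at degrees `≥ d`. -/
noncomputable def Wge {n : ℕ} (d : ℕ) (f : (Fin n → Bool) → ℝ) : ℝ :=
  ∑ T ∈ Finset.univ.filter (fun T : Finset (Fin n) => d ≤ T.card), fwCoeff f T ^ 2

/-- Flip coordinate `i`. -/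
def flipBit {n : ℕ} (y : Fin n → Bool) (i : Fin n) : Fin n → Bool :=
  Function.update y i (!(y i))

/-- `i` is `S`-pivotal for `f` on input `x`. -/
def pivotal {n : ℕ} (f : (Fin n → Bool) → ℝ) (S : Finset (Fin n)) (i : Fin n)
    (x : Fin n → Bool) : Prop :=
  ∃ y : Fin n → Bool, (∀ j, j ∉ S → y j = x j) ∧ f y ≠ f (flipBit y i)

/-- Joint influence `JInf_S(f)`. -/
noncomputable def JInf {n : ℕ} (f : (Fin n → Bool) → ℝ) (S : Finset (Fin n)) : ℝ :=
  pr (fun x => ∀ i ∈ S, pivotal f S i x)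

/-- Single-bit discrete partial derivative. -/
noncomputable def deriv1 {n : ℕ} (i : Fin n) (f : (Fin n → Bool) → ℝ) :
    (Fin n → Bool) → ℝ :=
  fun x => (f (Function.update x i true) - f (Function.update x i false)) / 2

/-- Multi-bit discrete partial derivative `∂_S f`. -/
noncomputable def derivS {n : ℕ} (S : Finset (Fin n)) (f : (Fin n → Bool) → ℝ) :
    (Fin n → Bool) → ℝ :=
  S.toList.foldr deriv1 f

/-- Heat semigroup `P_t`. -/
noncomputable def heat {n : ℕ} (t : ℝ) (g : (Fin n → Bool) → ℝ) : (Fin n → Bool) → ℝ :=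
  fun x => ∑ S : Finset (Fin n), Real.exp (-(S.card : ℝ) * t) * fwCoeff g S * walsh S x

/-- Squared `L²` norm. -/
noncomputable def norm2sq {n : ℕ} (g : (Fin n → Bool) → ℝ) : ℝ :=
  expectation (fun x => g x ^ 2)

/-- Total influence. -/
noncomputable def totinf {n : ℕ} (f : (Fin n → Bool) → ℝ) : ℝ :=
  ∑ i : Fin n, TInf f {i}


lemma dualOrtho {n : ℕ} (x y : Fin n → Bool) :
    ∑ T : Finset (Fin n), walsh T x * walsh T y = if x = y then (2:ℝ)^n else 0 := by
  have h1 : ∀ T : Finset (Fin n), walsh T x * walsh T y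
      = ∏ j ∈ T, ((if x j then (1:ℝ) else -1) * (if y j then (1:ℝ) else -1)) := by
    intro T; rw [walsh, walsh, ← Finset.prod_mul_distrib]
  simp only [h1]
  have h2 := Finset.prod_add
    (fun j : Fin n => (if x j then (1:ℝ) else -1) * (if y j then (1:ℝ) else -1))
    (fun _ : Fin n => (1:ℝ)) Finset.univ
  simp only [Finset.prod_const_one, mul_one, Finset.powerset_univ] at h2
  rw [← h2]
  by_cases hxy : x = y
  · subst hxy
    rw [if_pos rfl]
    have : ∀ j : Fin n, ((if x j then (1:ℝ) else -1) * (if x j then (1:ℝ) else -1) + 1) = 2 := by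
      intro j; cases h : x j <;> norm_num
    rw [Finset.prod_congr rfl (fun j _ => this j)]
    simp
  · rw [if_neg hxy]
    obtain ⟨j, hj⟩ : ∃ j, x j ≠ y j := by
      by_contra h; push_neg at h; exact hxy (funext h)
    apply Finset.prod_eq_zero (Finset.mem_univ j)
    cases hxj : x j <;> cases hyj : y j <;> simp_all

lemma parseval {n : ℕ} (g : (Fin n → Bool) → ℝ) :
    ∑ T : Finset (Fin n), fwCoeff g T ^ 2 = norm2sq g := by
  have key : ∑ T : Finset (Fin n), (∑ x : Fin n → Bool, g x * walsh T x) ^ 2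
      = (2:ℝ)^n * ∑ x : Fin n → Bool, g x ^ 2 := by
    have h1 : ∀ T : Finset (Fin n), (∑ x : Fin n → Bool, g x * walsh T x) ^ 2
        = ∑ x : Fin n → Bool, ∑ y : Fin n → Bool,
            g x * g y * (walsh T x * walsh T y) := by
      intro T
      rw [sq, Finset.sum_mul_sum]
      apply Finset.sum_congr rfl; intro x _
      apply Finset.sum_congr rfl; intro y _
      ring
    simp only [h1]
    rw [Finset.sum_comm]
    have h2 : ∀ x : Fin n → Bool, ∑ T : Finset (Fin n), ∑ y : Fin n → Bool,
        g x * g y * (walsh T x * walsh T y)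
        = (2:ℝ)^n * g x ^ 2 := by
      intro x
      rw [Finset.sum_comm]
      have : ∀ y : Fin n → Bool, ∑ T : Finset (Fin n), g x * g y * (walsh T x * walsh T y)
          = g x * g y * (if x = y then (2:ℝ)^n else 0) := by
        intro y; rw [← Finset.mul_sum, dualOrtho]
      simp only [this, mul_ite, mul_zero]
      rw [Finset.sum_ite_eq (Finset.univ) x (fun y => g x * g y * (2:ℝ)^n)]
      simp [sq]; ring
    simp only [h2]
    rw [← Finset.mul_sum]
  unfold fwCoeff norm2sq expectation
  have h2n : ((2:ℝ)^n) ≠ 0 := by positivity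
  simp only [div_pow, ← Finset.sum_div]
  rw [key]
  field_simp

lemma flipBit_flipBit {n : ℕ} (x : Fin n → Bool) (i : Fin n) :
    flipBit (flipBit x i) i = x := by
  unfold flipBit
  simp [Function.update_self, Function.update_idem]

lemma flipBit_apply_self {n : ℕ} (x : Fin n → Bool) (i : Fin n) :
    flipBit x i i = !(x i) := by simp [flipBit]

lemma flipBit_apply_ne {n : ℕ} (x : Fin n → Bool) (i j : Fin n) (h : j ≠ i) :
    flipBit x i j = x j := by simp [flipBit, Function.update_of_ne h]

lemma walsh_flip {n : ℕ} (U : Finset (Fin n)) (i : Fin n) (x : Fin n → Bool) :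
    walsh U (flipBit x i) = (if i ∈ U then (-1:ℝ) else 1) * walsh U x := by
  by_cases hi : i ∈ U
  · rw [if_pos hi]
    unfold walsh
    rw [← Finset.mul_prod_erase U _ hi, ← Finset.mul_prod_erase U _ hi]
    have h1 : ∀ j ∈ U.erase i, (if flipBit x i j then (1:ℝ) else -1)
        = (if x j then (1:ℝ) else -1) := by
      intro j hj
      rw [flipBit_apply_ne x i j (Finset.ne_of_mem_erase hj)]
    rw [Finset.prod_congr rfl h1, flipBit_apply_self]
    cases h : x i <;> simp
  · rw [if_neg hi, one_mul]
    unfold walsh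
    apply Finset.prod_congr rfl
    intro j hj
    rw [flipBit_apply_ne x i j (fun h => hi (h ▸ hj))]

lemma walsh_insert {n : ℕ} (U : Finset (Fin n)) (i : Fin n) (hi : i ∉ U) (x : Fin n → Bool) :
    walsh (insert i U) x = (if x i then (1:ℝ) else -1) * walsh U x := by
  unfold walsh; rw [Finset.prod_insert hi]

lemma deriv1_eq {n : ℕ} (i : Fin n) (g : (Fin n → Bool) → ℝ) (x : Fin n → Bool) :
    deriv1 i g x = (if x i then (1:ℝ) else -1) * (g x - g (flipBit x i)) / 2 := by
  unfold deriv1 flipBit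
  cases h : x i
  · have h1 : Function.update x i false = x := by
      rw [← h]; exact Function.update_eq_self i x
    rw [h1]; simp
  · have h1 : Function.update x i true = x := by
      rw [← h]; exact Function.update_eq_self i x
    rw [h1]; simp

lemma fwCoeff_deriv1 {n : ℕ} (i : Fin n) (g : (Fin n → Bool) → ℝ) (U : Finset (Fin n)) :
    fwCoeff (deriv1 i g) U = if i ∈ U then 0 else fwCoeff g (insert i U) := by
  have flip_sum : ∀ A : (Fin n → Bool) → ℝ,
      ∑ x : Fin n → Bool, A (flipBit x i) = ∑ x : Fin n → Bool, A x := by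
    intro A
    apply Fintype.sum_bijective (fun x => flipBit x i)
      (Function.Involutive.bijective (fun x => flipBit_flipBit x i))
    intro x; rfl
  have main : ∑ x : Fin n → Bool, deriv1 i g x * walsh U x
      = if i ∈ U then 0 else ∑ x : Fin n → Bool, g x * walsh (insert i U) x := by
    have step : ∀ x : Fin n → Bool, deriv1 i g x * walsh U x =
        ((if x i then (1:ℝ) else -1) * g x * walsh U x
          - (if x i then (1:ℝ) else -1) * g (flipBit x i) * walsh U x) / 2 := by
      intro x; rw [deriv1_eq]; ring
    simp only [step]
    rw [← Finset.sum_div, Finset.sum_sub_distrib]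
    have reidx : ∑ x : Fin n → Bool, (if x i then (1:ℝ) else -1) * g (flipBit x i) * walsh U x
        = ∑ x : Fin n → Bool,
            (if flipBit x i i then (1:ℝ) else -1) * g x * walsh U (flipBit x i) := by
      rw [← flip_sum (fun y => (if flipBit y i i then (1:ℝ) else -1) * g y * walsh U (flipBit y i))]
      apply Finset.sum_congr rfl
      intro x _
      rw [flipBit_flipBit]
    rw [reidx]
    by_cases hi : i ∈ U
    · rw [if_pos hi]
      have : ∀ x : Fin n → Bool,
          (if flipBit x i i then (1:ℝ) else -1) * g x * walsh U (flipBit x i)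
          = (if x i then (1:ℝ) else -1) * g x * walsh U x := by
        intro x
        rw [flipBit_apply_self, walsh_flip, if_pos hi]
        cases h : x i <;> simp
      simp only [this]
      simp
    · rw [if_neg hi]
      have : ∀ x : Fin n → Bool,
          (if flipBit x i i then (1:ℝ) else -1) * g x * walsh U (flipBit x i)
          = -((if x i then (1:ℝ) else -1) * g x * walsh U x) := by
        intro x
        rw [flipBit_apply_self, walsh_flip, if_neg hi]
        cases h : x i <;> simp
      simp only [this]
      rw [Finset.sum_neg_distrib]
      have hins : ∀ x : Fin n → Bool, g x * walsh (insert i U) x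
          = (if x i then (1:ℝ) else -1) * g x * walsh U x := by
        intro x; rw [walsh_insert U i hi]; ring
      simp only [hins]
      ring
  unfold fwCoeff expectation
  rw [main]
  by_cases hi : i ∈ U <;> simp [hi]

lemma fwCoeff_foldr {n : ℕ} (f : (Fin n → Bool) → ℝ) :
    ∀ (l : List (Fin n)), l.Nodup → ∀ (U : Finset (Fin n)),
      fwCoeff (l.foldr deriv1 f) U
        = if ∀ i ∈ l, i ∉ U then fwCoeff f (U ∪ l.toFinset) else 0 := by
  intro l
  induction l with
  | nil => intro _ U; simp
  | cons i t ih =>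
    intro hnd U
    rw [List.nodup_cons] at hnd
    obtain ⟨hit, hndt⟩ := hnd
    rw [List.foldr_cons, fwCoeff_deriv1, ih hndt]
    by_cases hiU : i ∈ U
    · rw [if_pos hiU, if_neg]
      push_neg
      exact ⟨i, List.mem_cons_self, hiU⟩
    · rw [if_neg hiU]
      have hcond : (∀ j ∈ t, j ∉ insert i U) ↔ (∀ j ∈ i :: t, j ∉ U) := by
        constructor
        · intro h j hj
          rcases List.mem_cons.mp hj with rfl | hj'
          · exact hiU
          · intro hU; exact h j hj' (Finset.mem_insert_of_mem hU)
        · intro h j hj hins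
          rcases Finset.mem_insert.mp hins with rfl | hU
          · exact hit hj
          · exact h j (List.mem_cons_of_mem i hj) hU
      have hset : insert i U ∪ t.toFinset = U ∪ (i :: t).toFinset := by
        rw [List.toFinset_cons, Finset.union_insert, Finset.insert_union]
      by_cases hc : ∀ j ∈ t, j ∉ insert i U
      · rw [if_pos hc, if_pos (hcond.mp hc), hset]
      · rw [if_neg hc, if_neg (fun h => hc (hcond.mpr h))]

lemma fwCoeff_derivS {n : ℕ} (f : (Fin n → Bool) → ℝ) (S : Finset (Fin n))
    (U : Finset (Fin n)) :
    fwCoeff (derivS S f) U = if Disjoint S U then fwCoeff f (U ∪ S) else 0 := by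
  unfold derivS
  rw [fwCoeff_foldr f S.toList (Finset.nodup_toList S) U]
  have h1 : (∀ i ∈ S.toList, i ∉ U) ↔ Disjoint S U := by
    simp only [Finset.mem_toList]
    exact (Finset.disjoint_left).symm
  have h2 : S.toList.toFinset = S := Finset.toList_toFinset S
  rw [h2]
  by_cases hc : Disjoint S U
  · rw [if_pos (h1.mpr hc), if_pos hc]
  · rw [if_neg (fun h => hc (h1.mp h)), if_neg hc]

lemma TInf_eq_norm2sq {n : ℕ} (f : (Fin n → Bool) → ℝ) (S : Finset (Fin n)) :
    TInf f S = norm2sq (derivS S f) := by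
  rw [← parseval (derivS S f)]
  have h1 : ∀ U : Finset (Fin n), fwCoeff (derivS S f) U ^ 2
      = if Disjoint S U then fwCoeff f (U ∪ S) ^ 2 else 0 := by
    intro U; rw [fwCoeff_derivS]
    by_cases h : Disjoint S U <;> simp [h]
  simp only [h1]
  rw [Finset.sum_ite, Finset.sum_const, smul_zero, add_zero]
  unfold TInf
  apply Finset.sum_nbij' (fun T => T \ S) (fun U => U ∪ S)
  · intro T hT
    simp only [Finset.mem_filter, Finset.mem_univ, true_and] at *
    exact Finset.disjoint_sdiff
  · intro U hU
    simp only [Finset.mem_filter, Finset.mem_univ, true_and] at *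
    exact Finset.subset_union_right
  · intro T hT
    simp only [Finset.mem_filter, Finset.mem_univ, true_and] at hT
    exact Finset.sdiff_union_of_subset hT
  · intro U hU
    simp only [Finset.mem_filter, Finset.mem_univ, true_and] at hU
    exact Finset.union_sdiff_cancel_right (disjoint_comm.mp hU)
  · intro T hT
    simp only [Finset.mem_filter, Finset.mem_univ, true_and] at hT
    rw [Finset.sdiff_union_of_subset hT]

lemma foldr_vals {n : ℕ} (f : (Fin n → Bool) → ℝ) (hf : ∀ x, f x = 1 ∨ f x = -1) :
    ∀ (l : List (Fin n)), l ≠ [] → ∀ x : Fin n → Bool,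
      ∃ m : ℤ, l.foldr deriv1 f x = (m : ℝ) / 2 ^ (l.length - 1)
        ∧ |l.foldr deriv1 f x| ≤ 1 := by
  intro l
  induction l with
  | nil => intro h; exact absurd rfl h
  | cons i t ih =>
    intro _ x
    rcases eq_or_ne t [] with rfl | ht
    · -- single derivative of a Boolean function
      simp only [List.foldr_cons, List.foldr_nil, List.length_cons, List.length_nil]
      unfold deriv1
      rcases hf (Function.update x i true) with h1 | h1 <;>
        rcases hf (Function.update x i false) with h2 | h2 <;>
        rw [h1, h2]
      · exact ⟨0, by norm_num⟩
      · exact ⟨1, by norm_num⟩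
      · exact ⟨-1, by norm_num⟩
      · exact ⟨0, by norm_num⟩
    · obtain ⟨m1, hm1, hb1⟩ := ih ht (Function.update x i true)
      obtain ⟨m2, hm2, hb2⟩ := ih ht (Function.update x i false)
      refine ⟨m1 - m2, ?_, ?_⟩
      · rw [List.foldr_cons,
          show deriv1 i (t.foldr deriv1 f) x
            = (t.foldr deriv1 f (Function.update x i true)
              - t.foldr deriv1 f (Function.update x i false)) / 2 from rfl,
          hm1, hm2]
        have hlen : (i :: t).length - 1 = (t.length - 1) + 1 := by
          have : 1 ≤ t.length := List.length_pos_iff.mpr ht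
          simp [List.length_cons]
          omega
        rw [hlen, pow_succ]
        push_cast
        field_simp
      · rw [List.foldr_cons,
          show deriv1 i (t.foldr deriv1 f) x
            = (t.foldr deriv1 f (Function.update x i true)
              - t.foldr deriv1 f (Function.update x i false)) / 2 from rfl,
          abs_div]
        have : |t.foldr deriv1 f (Function.update x i true)
            - t.foldr deriv1 f (Function.update x i false)| ≤ 2 := by
          calc _ ≤ |t.foldr deriv1 f (Function.update x i true)|
              + |t.foldr deriv1 f (Function.update x i false)| := abs_sub _ _
          _ ≤ 2 := by linarith
        rw [abs_two]
        linarith [this, abs_nonneg (t.foldr deriv1 f (Function.update x i true)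
            - t.foldr deriv1 f (Function.update x i false))]

/-- `P(∂_S f ≠ 0) ≥ Inf_S(f) ≥ 2^{-(2r-2)} P(∂_S f ≠ 0)`. -/
theorem statement6 (n : ℕ) (f : (Fin n → Bool) → ℝ) (hf : ∀ x, f x = 1 ∨ f x = -1)
    (S : Finset (Fin n)) (hS : S.Nonempty) :
    pr (fun x => derivS S f x ≠ 0) ≥ TInf f S ∧
    TInf f S ≥ (1 / 2 ^ (2 * S.card - 2)) * pr (fun x => derivS S f x ≠ 0) := by
  have hr : 1 ≤ S.card := hS.card_pos
  have hlist : S.toList ≠ [] := by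
    intro h
    have : S = ∅ := by
      rw [← Finset.toList_toFinset S, h]; rfl
    exact hS.ne_empty this
  have hlen : S.toList.length = S.card := Finset.length_toList S
  have hvals : ∀ x : Fin n → Bool, ∃ m : ℤ,
      derivS S f x = (m : ℝ) / 2 ^ (S.card - 1) ∧ |derivS S f x| ≤ 1 := by
    intro x
    obtain ⟨m, hm, hb⟩ := foldr_vals f hf S.toList hlist x
    exact ⟨m, by rw [← hlen]; exact hm, hb⟩
  have hpow : ((2:ℝ) ^ (S.card - 1)) ^ 2 = 2 ^ (2 * S.card - 2) := by
    rw [← pow_mul]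
    congr 1
    omega
  have key1 : ∀ x : Fin n → Bool,
      derivS S f x ^ 2 ≤ (if derivS S f x ≠ 0 then (1:ℝ) else 0) := by
    intro x
    obtain ⟨m, _, hb⟩ := hvals x
    by_cases h : derivS S f x = 0
    · rw [if_neg (by simpa using h), h]; norm_num
    · rw [if_pos h]
      nlinarith [abs_nonneg (derivS S f x), sq_abs (derivS S f x)]
  have key2 : ∀ x : Fin n → Bool,
      (1 / 2 ^ (2 * S.card - 2)) * (if derivS S f x ≠ 0 then (1:ℝ) else 0)
        ≤ derivS S f x ^ 2 := by
    intro x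
    obtain ⟨m, hm, _⟩ := hvals x
    by_cases h : derivS S f x = 0
    · rw [if_neg (by simpa using h), h]; norm_num
    · rw [if_pos h, mul_one]
      have hmne : m ≠ 0 := by
        intro hm0; apply h; rw [hm, hm0]; norm_num
      have hm1 : (1:ℝ) ≤ (m:ℝ)^2 := by
        have h1 : 1 ≤ |m| := Int.one_le_abs hmne
        have h2 : (1:ℝ) ≤ |(m:ℝ)| := by exact_mod_cast h1
        nlinarith [sq_abs (m:ℝ)]
      rw [hm, div_pow, hpow]
      have hp : (0:ℝ) < 2 ^ (2 * S.card - 2) := by positivity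
      rw [div_le_div_iff₀ hp hp] -- goal: 1 * 2^.. ≤ m^2 * 2^..
      nlinarith
  have hTInf : TInf f S = (∑ x : Fin n → Bool, derivS S f x ^ 2) / 2 ^ n := by
    rw [TInf_eq_norm2sq]; rfl
  have hpr : pr (fun x => derivS S f x ≠ 0)
      = (∑ x : Fin n → Bool, if derivS S f x ≠ 0 then (1:ℝ) else 0) / 2 ^ n := by
    unfold pr expectation
    congr 1
    apply Finset.sum_congr rfl
    intro x _
    by_cases h : derivS S f x = 0 <;> simp [h]
  have h2n : (0:ℝ) < 2 ^ n := by positivity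
  have hsum1 := Finset.sum_le_sum (fun x (_ : x ∈ Finset.univ) => key1 x)
  have hsum2 := Finset.sum_le_sum (fun x (_ : x ∈ Finset.univ) => key2 x)
  rw [← Finset.mul_sum] at hsum2
  constructor
  · rw [hTInf, hpr, ge_iff_le, div_le_div_iff₀ h2n h2n]
    nlinarith
  · rw [hTInf, hpr, ge_iff_le, ← mul_div_assoc, div_le_div_iff₀ h2n h2n]
    nlinarith
end

section
/- Let n, k, t, d be positive integers with k ≥ d, and let A₁,…,A_t ⊆ [n] be distinct sets each with |A_i| = k and with |A_i ∩ A_j| ≤ d−1 for all i ≠ j. Define H : {−1,1}^n → {−1,1} by H(x) = +1 if there exists i ∈ [t] such that x_j = +1 for all j ∈ A_i, and H(x) = −1 otherwise. Then P(H = +1) ≥ (t·2^{−k}) / (1 + 2^d · t · 2^{−k}). -/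
open Finset MeasureTheory
open scoped BigOperators Classical

lemma count_allTrue {n : ℕ} (B : Finset (Fin n)) :
    ∑ x : Fin n → Bool, (if ∀ j ∈ B, x j = true then (1:ℝ) else 0) = 2 ^ (n - B.card) := by
  set f : Fin n → Bool → ℝ := fun j b => if j ∈ B then (if b then 1 else 0) else 1 with hf
  have h1 : ∀ x : Fin n → Bool, (if ∀ j ∈ B, x j = true then (1:ℝ) else 0)
      = ∏ j : Fin n, f j (x j) := by
    intro x
    by_cases h : ∀ j ∈ B, x j = true
    · rw [if_pos h, eq_comm, Finset.prod_eq_one]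
      intro j _
      by_cases hj : j ∈ B
      · simp [hf, hj, h j hj]
      · simp [hf, hj]
    · rw [if_neg h, eq_comm]
      push_neg at h
      obtain ⟨j, hj, hxj⟩ := h
      refine Finset.prod_eq_zero (Finset.mem_univ j) ?_
      simp [hf, hj, hxj]
  simp_rw [h1]
  rw [← Fintype.piFinset_univ, ← Finset.prod_univ_sum]
  have h2 : ∀ j : Fin n, (∑ b ∈ (Finset.univ : Finset Bool), f j b)
      = if j ∈ B then 1 else 2 := by
    intro j; by_cases hj : j ∈ B <;> simp [hf, hj]
  simp_rw [h2]
  rw [Finset.prod_ite, Finset.prod_const_one, one_mul, Finset.prod_const]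
  congr 1
  have : Finset.univ.filter (fun j => j ∉ B) = Bᶜ := by ext j; simp
  rw [this, Finset.card_compl, Fintype.card_fin]

/-- the tribes-type function takes the value `+1` with probability at
least `(t 2^{-k}) / (1 + 2^d t 2^{-k})`. -/
theorem statement18 (n k t d : ℕ) (hn : 1 ≤ n) (hd : 1 ≤ d) (hk : d ≤ k) (ht : 1 ≤ t)
    (A : Fin t → Finset (Fin n)) (hcard : ∀ i, (A i).card = k)
    (hdist : ∀ i j, i ≠ j → A i ≠ A j)
    (hint : ∀ i j, i ≠ j → (A i ∩ A j).card ≤ d - 1)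
    (H : (Fin n → Bool) → ℝ)
    (hH : ∀ x, H x = if ∃ i : Fin t, ∀ j ∈ A i, x j = true then (1 : ℝ) else -1) :
    pr (fun x => H x = 1) ≥ ((t : ℝ) / 2 ^ k) / (1 + 2 ^ d * ((t : ℝ) / 2 ^ k)) := by
  classical
  have hkn : k ≤ n := by
    have := Finset.card_le_univ (A ⟨0, ht⟩)
    rw [hcard ⟨0, ht⟩] at this; simpa using this
  set g : Fin t → (Fin n → Bool) → ℝ :=
    fun i x => if ∀ j ∈ A i, x j = true then 1 else 0 with hg
  set Nr : (Fin n → Bool) → ℝ := fun x => ∑ i, g i x with hNr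
  set I : (Fin n → Bool) → ℝ :=
    fun x => if ∃ i : Fin t, ∀ j ∈ A i, x j = true then 1 else 0 with hI
  set M : ℝ := ∑ x : Fin n → Bool, I x with hM
  set S1 : ℝ := ∑ x : Fin n → Bool, Nr x with hS1
  set S2 : ℝ := ∑ x : Fin n → Bool, Nr x ^ 2 with hS2
  -- indicator facts
  have hIg : ∀ x, I x * Nr x = Nr x := by
    intro x
    by_cases h : ∃ i : Fin t, ∀ j ∈ A i, x j = true
    · simp [hI, h]
    · have h0 : Nr x = 0 := by
        refine Finset.sum_eq_zero fun i _ => ?_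
        simp only [hg]
        rw [if_neg]
        exact fun hc => h ⟨i, hc⟩
      simp [h0]
  have hI2 : ∀ x, I x ^ 2 = I x := by
    intro x; simp only [hI]; split <;> norm_num
  -- Cauchy-Schwarz
  have hCS : S1 ^ 2 ≤ M * S2 := by
    have h := Finset.sum_mul_sq_le_sq_mul_sq Finset.univ I Nr
    simp_rw [hIg, hI2] at h
    exact h
  -- S1 value
  have hS1val : S1 = (t : ℝ) * 2 ^ (n - k) := by
    rw [hS1]
    simp only [hNr]
    rw [Finset.sum_comm]
    have : ∀ i : Fin t, ∑ x : Fin n → Bool, g i x = 2 ^ (n - k) := by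
      intro i
      have := count_allTrue (A i)
      rw [hcard i] at this
      exact this
    rw [Finset.sum_congr rfl fun i _ => this i, Finset.sum_const, Finset.card_univ,
      Fintype.card_fin, nsmul_eq_mul]
  -- pair counts
  set c : Fin t → Fin t → ℝ := fun i j => 2 ^ (n - (A i ∪ A j).card) with hc
  have hpair : ∀ i j : Fin t, ∑ x : Fin n → Bool, g i x * g j x = c i j := by
    intro i j
    have h1 : ∀ x : Fin n → Bool,
        g i x * g j x = (if ∀ l ∈ A i ∪ A j, x l = true then (1:ℝ) else 0) := by
      intro x
      simp only [hg, Finset.forall_mem_union]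
      split_ifs <;> simp_all
    simp_rw [h1]
    exact count_allTrue _
  have hS2val : S2 = ∑ i : Fin t, ∑ j : Fin t, c i j := by
    rw [hS2]
    have : ∀ x, Nr x ^ 2 = ∑ i : Fin t, ∑ j : Fin t, g i x * g j x := by
      intro x; rw [sq, hNr]; rw [Finset.sum_mul_sum]
    simp_rw [this]
    rw [Finset.sum_comm]
    refine Finset.sum_congr rfl fun i _ => ?_
    rw [Finset.sum_comm]
    exact Finset.sum_congr rfl fun j _ => hpair i j
  set Bnd : ℝ := 2 ^ (n + d - 1) / 2 ^ (2 * k) with hBnd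
  have hBnd0 : 0 < Bnd := by positivity
  have hcdiag : ∀ i, c i i = 2 ^ (n - k) := by
    intro i; simp [hc, Finset.union_self, hcard i]
  have hcoff : ∀ i j, i ≠ j → c i j ≤ Bnd := by
    intro i j hij
    have hu : (A i ∪ A j).card + (A i ∩ A j).card = 2 * k := by
      rw [Finset.card_union_add_card_inter, hcard i, hcard j]; ring
    have hun : (A i ∪ A j).card ≤ n := by
      have := Finset.card_le_univ (A i ∪ A j); simpa using this
    have hexp : (n - (A i ∪ A j).card) + 2 * k ≤ n + d - 1 := by
      have := hint i j hij; omega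
    rw [hc, hBnd, le_div_iff₀ (by positivity)]
    rw [← pow_add]
    exact pow_le_pow_right₀ one_le_two hexp
  have hS2b : S2 ≤ (t : ℝ) * 2 ^ (n - k) + (t : ℝ) ^ 2 * Bnd := by
    rw [hS2val]
    have hrow : ∀ i : Fin t, ∑ j : Fin t, c i j ≤ 2 ^ (n - k) + (t : ℝ) * Bnd := by
      intro i
      rw [← Finset.add_sum_erase Finset.univ (c i) (Finset.mem_univ i)]
      refine add_le_add (le_of_eq (hcdiag i)) ?_
      calc ∑ j ∈ Finset.univ.erase i, c i j
          ≤ (Finset.univ.erase i).card • Bnd := by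
            refine Finset.sum_le_card_nsmul _ _ _ fun j hj => ?_
            exact hcoff i j (Ne.symm (Finset.ne_of_mem_erase hj))
        _ ≤ (t : ℝ) * Bnd := by
            rw [nsmul_eq_mul]
            refine mul_le_mul_of_nonneg_right ?_ hBnd0.le
            have : (Finset.univ.erase i).card ≤ t := by
              refine le_trans (Finset.card_le_card (Finset.erase_subset _ _)) ?_
              simp
            exact_mod_cast this
    calc ∑ i : Fin t, ∑ j : Fin t, c i j
        ≤ ∑ i : Fin t, (2 ^ (n - k) + (t : ℝ) * Bnd) :=
          Finset.sum_le_sum fun i _ => hrow i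
      _ = (t : ℝ) * 2 ^ (n - k) + (t : ℝ) ^ 2 * Bnd := by
          rw [Finset.sum_const, Finset.card_univ, Fintype.card_fin, nsmul_eq_mul]; ring
  -- pr = M / 2^n
  have hpr : pr (fun x => H x = 1) = M / 2 ^ n := by
    rw [pr, expectation, hM]
    congr 1
    refine Finset.sum_congr rfl fun x _ => ?_
    rw [hH x, hI]
    by_cases h : ∃ i : Fin t, ∀ j ∈ A i, x j = true
    · simp [h]
    · norm_num [h]
  rw [hpr, ge_iff_le]
  -- put it together
  set S2b : ℝ := (t : ℝ) * 2 ^ (n - k) + (t : ℝ) ^ 2 * Bnd with hS2bdef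
  have ht0 : (0:ℝ) < t := by exact_mod_cast ht
  have hS2b0 : 0 < S2b := by positivity
  have hM0 : 0 ≤ M := Finset.sum_nonneg fun x _ => by simp only [hI]; split <;> norm_num
  have hMge : S1 ^ 2 / S2b ≤ M := by
    rw [div_le_iff₀ hS2b0]
    calc S1 ^ 2 ≤ M * S2 := hCS
      _ ≤ M * S2b := mul_le_mul_of_nonneg_left hS2b hM0
  refine le_trans ?_ (div_le_div_of_nonneg_right hMge (by positivity : (0:ℝ) ≤ 2 ^ n))
  -- remains: RHS ≤ (S1^2 / S2b) / 2^n
  have hK0 : (0:ℝ) < 2 ^ k := by positivity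
  have hKne : ((2:ℝ) ^ k) ≠ 0 := ne_of_gt hK0
  have hT1 : (1:ℝ) ≤ t := by exact_mod_cast ht
  have hak : (2:ℝ) ^ (n - k) * 2 ^ k = 2 ^ n := by
    rw [← pow_add, Nat.sub_add_cancel hkn]
  have hBndeq : Bnd = 2 ^ (n - k) * 2 ^ d / (2 * 2 ^ k) := by
    rw [hBnd, div_eq_div_iff (by positivity) (by positivity)]
    rw [show (2:ℝ) * 2 ^ k = 2 ^ (k + 1) by rw [pow_succ]; ring, ← pow_add, ← pow_add,
      ← pow_add]
    congr 1
    omega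
  have step1 : ((t:ℝ) / 2 ^ k) / (1 + 2 ^ d * ((t:ℝ) / 2 ^ k))
      = (t:ℝ) / (2 ^ k + 2 ^ d * t) := by
    rw [div_div]
    congr 1
    field_simp
  have step2 : S1 ^ 2 / S2b / 2 ^ n
      = (t:ℝ) / (2 ^ k + (t:ℝ) * 2 ^ d / 2) := by
    have hden2 : (0:ℝ) < 2 ^ k + (t:ℝ) * 2 ^ d / 2 := by positivity
    rw [div_div, div_eq_div_iff
      (mul_ne_zero (ne_of_gt hS2b0) (by positivity : ((2:ℝ) ^ n) ≠ 0))
      (ne_of_gt hden2)]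
    rw [hS1val, hS2bdef, hBndeq, ← hak]
    field_simp
  rw [step1, step2]
  refine div_le_div_of_nonneg_left ht0.le (by positivity) ?_
  have h2d : (0:ℝ) ≤ (t:ℝ) * 2 ^ d := by positivity
  linarith
end

section
/- Let d ≥ 2 be an integer and n ≥ 4 be such that k := d·log₂(n/log₂ n) is a positive integer. Let F be a family of k-element subsets of [n] such that (a) every d-element subset of [n] is contained in at most one member of F, and (b) for every non-empty S ⊆ [n] with |S| ≤ d, the number of A ∈ F with S ⊆ A is at most (n/log₂ n)^{d−|S|}. Define H : {−1,1}^n → {−1,1} by H(x) = +1 if there exists A ∈ F such that x_j = +1 for all j ∈ A, and H(x) = −1 otherwise. Then for every non-empty S ⊆ [n] with |S| ≤ d, JInf_S(H) ≤ d^d · 2^{d³} · (log₂ n / n)^{|S|}. -/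
set_option maxHeartbeats 1000000


open Finset MeasureTheory
open scoped BigOperators Classical

/- auxiliary lemmas -/
lemma pr_mono {n : ℕ} {P Q : (Fin n → Bool) → Prop} (h : ∀ x, P x → Q x) : pr P ≤ pr Q := by
  unfold pr expectation
  apply div_le_div_of_nonneg_right ?_ (by positivity)
  apply Finset.sum_le_sum
  intro x _
  by_cases h1 : P x
  · simp [h1, h x h1]
  · split_ifs <;> norm_num

lemma pr_exists_le {n : ℕ} {ι : Type*} (I : Finset ι) (Q : ι → (Fin n → Bool) → Prop) :
    pr (fun x => ∃ a ∈ I, Q a x) ≤ ∑ a ∈ I, pr (fun x => Q a x) := by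
  unfold pr expectation
  rw [← Finset.sum_div]
  apply div_le_div_of_nonneg_right ?_ (by positivity)
  rw [Finset.sum_comm]
  apply Finset.sum_le_sum
  intro x _
  split_ifs with h1
  · obtain ⟨a, ha, hQ⟩ := h1
    calc (1:ℝ) = if Q a x then (1:ℝ) else 0 := by rw [if_pos hQ]
    _ ≤ _ := Finset.single_le_sum (f := fun b => if Q b x then (1:ℝ) else 0)
        (fun b _ => by by_cases h : Q b x <;> simp [h]) ha
  · exact Finset.sum_nonneg fun b _ => by by_cases h : Q b x <;> simp [h]

lemma pr_eq_card {n : ℕ} (P : (Fin n → Bool) → Prop) :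
    pr P = ((Finset.univ.filter P).card : ℝ) / 2 ^ n := by
  unfold pr expectation
  congr 1
  beta_reduce
  rw [Finset.sum_boole]

lemma pr_all_true {n : ℕ} (T : Finset (Fin n)) :
    pr (fun x => ∀ j ∈ T, x j = true) ≤ ((1:ℝ)/2) ^ T.card := by
  rw [pr_eq_card, Finset.filter_congr_decidable]
  have hset : Finset.univ.filter (fun x : Fin n → Bool => ∀ j ∈ T, x j = true)
      = Fintype.piFinset (fun j => if j ∈ T then ({true} : Finset Bool) else Finset.univ) := by
    ext x
    simp only [Finset.mem_filter, Finset.mem_univ, true_and, Fintype.mem_piFinset]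
    constructor
    · intro h j
      by_cases hj : j ∈ T <;> simp [hj, h j]
    · intro h j hj
      have := h j
      simpa [hj] using this
  rw [hset, Fintype.card_piFinset]
  have hprod : (∏ j : Fin n, (if j ∈ T then ({true} : Finset Bool) else Finset.univ).card)
      = 2 ^ (n - T.card) := by
    have heach : ∀ j : Fin n, (if j ∈ T then ({true} : Finset Bool) else Finset.univ).card
        = if j ∈ T then 1 else 2 := by
      intro j; split_ifs <;> simp
    simp only [heach]
    rw [Finset.prod_ite, Finset.prod_const_one, Finset.prod_const, one_mul]
    congr 1
    have : Finset.univ.filter (fun j : Fin n => ¬ j ∈ T) = Tᶜ := by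
      ext j; simp
    rw [this, Finset.card_compl, Fintype.card_fin]
  rw [hprod]
  have hTn : T.card ≤ n := by simpa using Finset.card_le_univ T
  rw [div_pow, one_pow, div_le_div_iff₀ (by positivity) (by positivity)]
  push_cast
  rw [← pow_add, Nat.sub_add_cancel hTn, one_mul]

lemma sum_card_le_card_biUnion_add {ι α : Type*} [DecidableEq α] [DecidableEq ι]
    (R : Finset ι) (A : ι → Finset α) :
    ∑ r ∈ R, (A r).card ≤ (R.biUnion A).card
      + ∑ r ∈ R, ∑ r' ∈ R.erase r, (A r ∩ A r').card := by
  induction R using Finset.induction_on with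
  | empty => simp
  | @insert a s ha ih =>
    rw [Finset.sum_insert ha, Finset.biUnion_insert]
    have h1 : (A a).card + (s.biUnion A).card
        = (A a ∪ s.biUnion A).card + (A a ∩ s.biUnion A).card :=
      (Finset.card_union_add_card_inter _ _).symm
    have h2 : (A a ∩ s.biUnion A).card ≤ ∑ r' ∈ s, (A a ∩ A r').card := by
      calc (A a ∩ s.biUnion A).card ≤ (s.biUnion (fun r => A a ∩ A r)).card := by
            apply Finset.card_le_card
            intro j hj
            rw [Finset.mem_inter, Finset.mem_biUnion] at hj
            obtain ⟨hj1, hj2⟩ := hj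
            obtain ⟨r, hr, hj3⟩ := hj2
            rw [Finset.mem_biUnion]
            exact ⟨r, hr, Finset.mem_inter.mpr ⟨hj1, hj3⟩⟩
      _ ≤ ∑ r' ∈ s, (A a ∩ A r').card := Finset.card_biUnion_le
    have h3 : (∑ r' ∈ s, (A a ∩ A r').card) + ∑ r ∈ s, ∑ r' ∈ s.erase r, (A r ∩ A r').card
        ≤ ∑ r ∈ insert a s, ∑ r' ∈ (insert a s).erase r, (A r ∩ A r').card := by
      rw [Finset.sum_insert ha, Finset.erase_insert ha]
      apply add_le_add le_rfl
      apply Finset.sum_le_sum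
      intro r hr
      apply Finset.sum_le_sum_of_subset
      exact Finset.erase_subset_erase _ (Finset.subset_insert _ _)
    omega


/-- joint-influence upper bound for the hypertribe function. -/
theorem statement19 (n d k : ℕ) (hd : 2 ≤ d) (hn : 4 ≤ n) (hk : 1 ≤ k)
    (hkeq : (k : ℝ) = d * Real.logb 2 ((n : ℝ) / Real.logb 2 n))
    (F : Finset (Finset (Fin n)))
    (hFcard : ∀ A ∈ F, A.card = k)
    (hpack : ∀ A ∈ F, ∀ B ∈ F, ∀ S : Finset (Fin n),
      S.card = d → S ⊆ A → S ⊆ B → A = B)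
    (hcover : ∀ S : Finset (Fin n), S.Nonempty → S.card ≤ d →
      ((F.filter (fun A => S ⊆ A)).card : ℝ) ≤
        ((n : ℝ) / Real.logb 2 n) ^ (d - S.card))
    (H : (Fin n → Bool) → ℝ)
    (hH : ∀ x, H x = if ∃ A ∈ F, ∀ j ∈ A, x j = true then (1 : ℝ) else -1) :
    ∀ S : Finset (Fin n), S.Nonempty → S.card ≤ d →
      JInf H S ≤ (d : ℝ) ^ d * 2 ^ (d ^ 3) * (Real.logb 2 n / n) ^ S.card := by
  intro S hSne hSd
  -- real preliminaries
  have hnpos : (0:ℝ) < n := by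
    have : (4:ℝ) ≤ n := by exact_mod_cast hn
    linarith
  have hL2 : (2:ℝ) ≤ Real.logb 2 n := by
    have h4 : Real.logb 2 (4:ℝ) = 2 := by
      rw [show (4:ℝ) = 2 ^ (2:ℕ) by norm_num, Real.logb_pow,
        Real.logb_self_eq_one (by norm_num : (1:ℝ) < 2)]
      norm_num
    calc (2:ℝ) = Real.logb 2 4 := h4.symm
    _ ≤ Real.logb 2 n := Real.logb_le_logb_of_le (by norm_num : (1:ℝ) < 2) (by norm_num)
        (by exact_mod_cast hn)
  have hLpos : (0:ℝ) < Real.logb 2 n := by linarith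
  set L : ℝ := Real.logb 2 n with hLdef
  set q : ℝ := (n:ℝ) / L with hqdef
  have hqpos : 0 < q := div_pos hnpos hLpos
  have h2k : (2:ℝ) ^ k = q ^ d := by
    have e1 : (2:ℝ) ^ (k:ℕ) = (2:ℝ) ^ ((k:ℕ):ℝ) := (Real.rpow_natCast 2 k).symm
    rw [e1, hkeq, mul_comm, Real.rpow_mul (by norm_num : (0:ℝ) ≤ 2),
      Real.rpow_logb (by norm_num) (by norm_num) hqpos, Real.rpow_natCast]
  -- the family of choice functions
  set Φ : Finset (Fin n → Finset (Fin n)) :=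
    Finset.univ.filter (fun φ => ∀ i : Fin n, (i ∈ S → φ i ∈ F ∧ i ∈ φ i) ∧ (i ∉ S → φ i = ∅))
    with hΦdef
  -- Step 1: reduce the pivotal event
  have hmono : ∀ x, (∀ i ∈ S, pivotal H S i x) →
      ∃ φ ∈ Φ, ∀ j ∈ (S.biUnion φ) \ S, x j = true := by
    intro x hx
    have hper : ∀ i ∈ S, ∃ A, A ∈ F ∧ i ∈ A ∧ ∀ j ∈ A, j ∉ S → x j = true := by
      intro i hi
      obtain ⟨y, hyag, hyne⟩ := hx i hi
      by_cases hc : ∃ A ∈ F, ∀ j ∈ A, y j = true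
      · have hcf : ¬ ∃ A ∈ F, ∀ j ∈ A, flipBit y i j = true := by
          intro hcf
          apply hyne
          rw [hH, hH, if_pos hc, if_pos hcf]
        obtain ⟨A, hAF, hAy⟩ := hc
        have hiA : i ∈ A := by
          by_contra hiA
          exact hcf ⟨A, hAF, fun j hj => by
            rw [flipBit, Function.update_of_ne (by rintro rfl; exact hiA hj)]
            exact hAy j hj⟩
        exact ⟨A, hAF, hiA, fun j hj hjS => (hyag j hjS).symm.trans (hAy j hj)⟩
      · have hcf : ∃ A ∈ F, ∀ j ∈ A, flipBit y i j = true := by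
          by_contra hcf
          apply hyne
          rw [hH, hH, if_neg hc, if_neg hcf]
        obtain ⟨A, hAF, hAy⟩ := hcf
        have hiA : i ∈ A := by
          by_contra hiA
          refine hc ⟨A, hAF, fun j hj => ?_⟩
          have hji : j ≠ i := by rintro rfl; exact hiA hj
          have := hAy j hj
          rwa [flipBit, Function.update_of_ne hji] at this
        refine ⟨A, hAF, hiA, fun j hj hjS => ?_⟩
        have hji : j ≠ i := by rintro rfl; exact hjS hi
        have := hAy j hj
        rw [flipBit, Function.update_of_ne hji] at this
        exact (hyag j hjS).symm.trans this
    have hch : ∀ i : Fin n, ∃ A : Finset (Fin n),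
        (i ∈ S → A ∈ F ∧ i ∈ A ∧ ∀ j ∈ A, j ∉ S → x j = true) ∧ (i ∉ S → A = ∅) := by
      intro i
      by_cases hi : i ∈ S
      · obtain ⟨A, h⟩ := hper i hi
        exact ⟨A, fun _ => h, fun h' => absurd hi h'⟩
      · exact ⟨∅, fun h' => absurd h' hi, fun _ => rfl⟩
    choose φ hφ using hch
    refine ⟨φ, ?_, ?_⟩
    · rw [hΦdef, Finset.mem_filter]
      refine ⟨Finset.mem_univ _, fun i => ⟨fun hi => ⟨((hφ i).1 hi).1, ((hφ i).1 hi).2.1⟩, (hφ i).2⟩⟩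
    · intro j hj
      rw [Finset.mem_sdiff, Finset.mem_biUnion] at hj
      obtain ⟨⟨i, hiS, hjφ⟩, hjS⟩ := hj
      exact ((hφ i).1 hiS).2.2 j hjφ hjS
  have hstep2 : JInf H S ≤ ∑ φ ∈ Φ, ((1:ℝ)/2) ^ ((S.biUnion φ \ S).card) := by
    have h1 : JInf H S ≤ pr (fun x => ∃ φ ∈ Φ, ∀ j ∈ (S.biUnion φ) \ S, x j = true) :=
      pr_mono hmono
    refine h1.trans ((pr_exists_le Φ _).trans ?_)
    exact Finset.sum_le_sum fun φ _ => pr_all_true _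
  -- the kernel map
  set κ : (Fin n → Finset (Fin n)) → (Fin n → Fin n) := fun φ i =>
    if h : i ∈ S then (S.filter (fun j => φ j = φ i)).min' ⟨i, Finset.mem_filter.mpr ⟨h, rfl⟩⟩
    else i with hκdef
  have hκS : ∀ φ, ∀ i ∈ S, κ φ i ∈ S ∧ φ (κ φ i) = φ i := by
    intro φ i hi
    have hmem := Finset.min'_mem (S.filter (fun j => φ j = φ i))
      ⟨i, Finset.mem_filter.mpr ⟨hi, rfl⟩⟩
    rw [Finset.mem_filter] at hmem
    have he : κ φ i = (S.filter (fun j => φ j = φ i)).min'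
        ⟨i, Finset.mem_filter.mpr ⟨hi, rfl⟩⟩ := by
      rw [hκdef]; exact dif_pos hi
    rw [he]
    exact hmem
  have hκfix : ∀ φ, ∀ i, i ∉ S → κ φ i = i := by
    intro φ i hi; rw [hκdef]; exact dif_neg hi
  have hκeqv : ∀ φ, ∀ i ∈ S, ∀ i' ∈ S, φ i = φ i' → κ φ i = κ φ i' := by
    intro φ i hi i' hi' he
    have hsets : S.filter (fun j => φ j = φ i) = S.filter (fun j => φ j = φ i') := by
      rw [he]
    rw [hκdef]
    simp only [dif_pos hi, dif_pos hi']
    congr 1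
  have hκidem : ∀ φ, ∀ i ∈ S, κ φ (κ φ i) = κ φ i := fun φ i hi =>
    hκeqv φ (κ φ i) (hκS φ i hi).1 i hi (hκS φ i hi).2
  have hmaps : ∀ φ ∈ Φ, κ φ ∈ Φ.image κ := fun φ h => Finset.mem_image_of_mem κ h
  have hdecomp : ∑ φ ∈ Φ, ((1:ℝ)/2) ^ ((S.biUnion φ \ S).card)
      = ∑ ψ ∈ Φ.image κ, ∑ φ ∈ Φ.filter (fun φ => κ φ = ψ),
          ((1:ℝ)/2) ^ ((S.biUnion φ \ S).card) :=
    (Finset.sum_fiberwise_of_maps_to hmaps _).symm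
  have hfiber : ∀ ψ ∈ Φ.image κ,
      ∑ φ ∈ Φ.filter (fun φ => κ φ = ψ), ((1:ℝ)/2) ^ ((S.biUnion φ \ S).card)
      ≤ 2 ^ (d^3) * (L / n) ^ S.card := by
    intro ψ hψ
    obtain ⟨φ₀, hφ₀, hκφ₀⟩ := Finset.mem_image.mp hψ
    have hψS : ∀ i ∈ S, ψ i ∈ S := fun i hi => hκφ₀ ▸ (hκS φ₀ i hi).1
    have hψid : ∀ i ∈ S, ψ (ψ i) = ψ i := fun i hi => by
      rw [← hκφ₀]; exact hκidem φ₀ i hi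
    set R : Finset (Fin n) := S.image ψ with hRdef
    set m : ℕ := R.card with hmdef
    have hRS : R ⊆ S := by
      intro r hr
      obtain ⟨i, hi, rfl⟩ := Finset.mem_image.mp hr
      exact hψS i hi
    have hψR : ∀ r ∈ R, ψ r = r := by
      intro r hr
      obtain ⟨i, hi, rfl⟩ := Finset.mem_image.mp hr
      exact hψid i hi
    have hm1 : 1 ≤ m := Finset.card_pos.mpr (hSne.image ψ)
    have hmd : m ≤ d := le_trans (Finset.card_le_card hRS) hSd
    set B : Fin n → Finset (Fin n) := fun r => S.filter (fun j => ψ j = r) with hBdef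
    have hBsum : ∑ r ∈ R, (B r).card = S.card :=
      (Finset.card_eq_sum_card_fiberwise (fun i hi => Finset.mem_image_of_mem ψ hi)).symm
    have hBne : ∀ r ∈ R, r ∈ B r := fun r hr =>
      Finset.mem_filter.mpr ⟨hRS hr, hψR r hr⟩
    have hBcd : ∀ r ∈ R, (B r).card ≤ d := fun r hr =>
      le_trans (Finset.card_le_card (Finset.filter_subset _ _)) hSd
    have hfib : ∀ φ ∈ Φ.filter (fun φ => κ φ = ψ),
        (∀ i, (i ∈ S → φ i ∈ F ∧ i ∈ φ i) ∧ (i ∉ S → φ i = ∅)) ∧ (∀ i ∈ S, φ (ψ i) = φ i) := by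
      intro φ hφm
      rw [Finset.mem_filter] at hφm
      obtain ⟨hφΦ, hφκ⟩ := hφm
      rw [hΦdef, Finset.mem_filter] at hφΦ
      exact ⟨hφΦ.2, fun i hi => by rw [← hφκ]; exact (hκS φ i hi).2⟩
    -- per-φ term bound
    have hterm : ∀ φ ∈ Φ.filter (fun φ => κ φ = ψ),
        ((1:ℝ)/2) ^ ((S.biUnion φ \ S).card) ≤ 2 ^ (d^3) / q ^ (m*d) := by
      intro φ hφm
      obtain ⟨hφp, hφψ⟩ := hfib φ hφm
      have hφκ : κ φ = ψ := (Finset.mem_filter.mp hφm).2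
      have hbi : S.biUnion φ = R.biUnion φ := by
        ext j
        simp only [Finset.mem_biUnion]
        constructor
        · rintro ⟨i, hi, hj⟩
          exact ⟨ψ i, Finset.mem_image_of_mem ψ hi, by rw [hφψ i hi]; exact hj⟩
        · rintro ⟨r, hr, hj⟩
          exact ⟨r, hRS hr, hj⟩
      have hdist : ∀ r ∈ R, ∀ r' ∈ R, r ≠ r' → φ r ≠ φ r' := by
        intro r hr r' hr' hne he
        apply hne
        have h1 : κ φ r = κ φ r' := hκeqv φ r (hRS hr) r' (hRS hr') he
        rw [hφκ, hψR r hr, hψR r' hr'] at h1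
        exact h1
      have hint : ∀ r ∈ R, ∀ r' ∈ R.erase r, (φ r ∩ φ r').card ≤ d - 1 := by
        intro r hr r' hr'
        have hr'R : r' ∈ R := Finset.mem_of_mem_erase hr'
        have hner : r' ≠ r := Finset.ne_of_mem_erase hr'
        have hrF : φ r ∈ F := ((hφp r).1 (hRS hr)).1
        have hr'F : φ r' ∈ F := ((hφp r').1 (hRS hr'R)).1
        by_contra hc
        push_neg at hc
        have hdle : d ≤ (φ r ∩ φ r').card := by omega
        obtain ⟨T, hTsub, hTcard⟩ := Finset.exists_subset_card_eq hdle
        have heq := hpack (φ r) hrF (φ r') hr'F T hTcard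
          (hTsub.trans Finset.inter_subset_left) (hTsub.trans Finset.inter_subset_right)
        exact hdist r hr r' hr'R (hner.symm) heq
      have hcards : ∀ r ∈ R, (φ r).card = k := fun r hr =>
        hFcard _ (((hφp r).1 (hRS hr)).1)
      have hUnion := sum_card_le_card_biUnion_add R φ
      rw [Finset.sum_congr rfl hcards, Finset.sum_const, smul_eq_mul] at hUnion
      have hintsum : ∑ r ∈ R, ∑ r' ∈ R.erase r, (φ r ∩ φ r').card ≤ m * ((m-1) * (d-1)) := by
        calc ∑ r ∈ R, ∑ r' ∈ R.erase r, (φ r ∩ φ r').card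
            ≤ ∑ r ∈ R, ∑ r' ∈ R.erase r, (d-1) :=
          Finset.sum_le_sum (fun r hr => Finset.sum_le_sum (fun r' hr' => hint r hr r' hr'))
        _ = ∑ r ∈ R, (m-1)*(d-1) := by
            apply Finset.sum_congr rfl
            intro r hr
            rw [Finset.sum_const, smul_eq_mul, Finset.card_erase_of_mem hr]
        _ = m * ((m-1)*(d-1)) := by rw [Finset.sum_const, smul_eq_mul]
      have hUS : (R.biUnion φ).card ≤ (S.biUnion φ \ S).card + S.card := by
        rw [hbi]
        exact Finset.card_le_card_sdiff_add_card
      have hkey : m * k ≤ (S.biUnion φ \ S).card + m * m * d := by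
        have e1 : m*(m-1)*d + m*d = m*m*d := by
          have hpred : (m-1) + 1 = m := Nat.succ_pred_eq_of_pos hm1
          calc m*(m-1)*d + m*d = m*d*((m-1)+1) := by ring
          _ = m*d*m := by rw [hpred]
          _ = m*m*d := by ring
        have h6 : m*((m-1)*(d-1)) ≤ m*(m-1)*d := by
          rw [mul_assoc]
          exact Nat.mul_le_mul_left m (Nat.mul_le_mul_left (m-1) (Nat.sub_le d 1))
        have h7 : d ≤ m * d := Nat.le_mul_of_pos_left d hm1
        have h9 : d + m*((m-1)*(d-1)) ≤ m*m*d := by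
          calc d + m*((m-1)*(d-1)) ≤ m*d + m*(m-1)*d := add_le_add h7 h6
          _ = m*m*d := by rw [add_comm]; exact e1
        calc m * k ≤ (R.biUnion φ).card + ∑ r ∈ R, ∑ r' ∈ R.erase r, (φ r ∩ φ r').card := by
              rw [hmdef]; exact hUnion
        _ ≤ ((S.biUnion φ \ S).card + S.card) + m*((m-1)*(d-1)) := add_le_add hUS hintsum
        _ ≤ (S.biUnion φ \ S).card + (d + m*((m-1)*(d-1))) := by
              have h8 : S.card ≤ d := hSd
              omega
        _ ≤ (S.biUnion φ \ S).card + m*m*d := Nat.add_le_add_left h9 _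
      have h2mk : (2:ℝ) ^ (m*k) ≤ 2 ^ ((S.biUnion φ \ S).card + m*m*d) :=
        pow_le_pow_right₀ (by norm_num) hkey
      rw [div_pow, one_pow, div_le_div_iff₀ (by positivity) (pow_pos hqpos _), one_mul]
      have hq' : q ^ (m*d) = (2:ℝ) ^ (m*k) := by
        rw [show m*d = d*m from mul_comm m d, pow_mul, ← h2k, ← pow_mul, mul_comm k m]
      rw [hq']
      calc (2:ℝ) ^ (m*k) ≤ 2 ^ ((S.biUnion φ \ S).card + m*m*d) := h2mk
      _ ≤ 2 ^ ((S.biUnion φ \ S).card + d^3) := by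
          apply pow_le_pow_right₀ (by norm_num)
          have hm3 : m*m*d ≤ d^3 := by
            calc m*m*d ≤ d*d*d := Nat.mul_le_mul (Nat.mul_le_mul hmd hmd) le_rfl
            _ = d^3 := by ring
          omega
      _ = 2 ^ (d^3) * 2 ^ ((S.biUnion φ \ S).card) := by rw [pow_add]; ring
    -- fiber cardinality bound
    have hfc : ((Φ.filter (fun φ => κ φ = ψ)).card : ℝ) ≤ q ^ (m*d - S.card) := by
      have hinj : (Φ.filter (fun φ => κ φ = ψ)).card
          ≤ (Fintype.piFinset (fun r => if r ∈ R then F.filter (fun A => B r ⊆ A)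
              else ({∅} : Finset (Finset (Fin n))))).card := by
        apply Finset.card_le_card_of_injOn (fun φ => fun r => if r ∈ R then φ r else ∅)
        · intro φ hφm
          obtain ⟨hφp, hφψ⟩ := hfib φ hφm
          rw [Finset.mem_coe, Fintype.mem_piFinset]
          intro r
          by_cases hr : r ∈ R
          · simp only [if_pos hr, Finset.mem_filter]
            refine ⟨((hφp r).1 (hRS hr)).1, ?_⟩
            intro j hj
            have hjS : j ∈ S := (Finset.mem_filter.mp hj).1
            have hjr : ψ j = r := (Finset.mem_filter.mp hj).2
            have hthis : φ (ψ j) = φ j := hφψ j hjS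
            rw [hjr] at hthis
            rw [hthis]
            exact ((hφp j).1 hjS).2
          · simp [if_neg hr]
        · intro φ1 h1 φ2 h2 he
          rw [Finset.mem_coe] at h1 h2
          obtain ⟨hφp1, hφψ1⟩ := hfib φ1 h1
          obtain ⟨hφp2, hφψ2⟩ := hfib φ2 h2
          funext i
          by_cases hi : i ∈ S
          · have hR : ψ i ∈ R := Finset.mem_image_of_mem ψ hi
            have hev := congrFun he (ψ i)
            simp only [if_pos hR] at hev
            rw [← hφψ1 i hi, ← hφψ2 i hi]
            exact hev
          · rw [(hφp1 i).2 hi, (hφp2 i).2 hi]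
      have hGcard : (Fintype.piFinset (fun r => if r ∈ R then F.filter (fun A => B r ⊆ A)
              else ({∅} : Finset (Finset (Fin n))))).card
          = ∏ r ∈ R, (F.filter (fun A => B r ⊆ A)).card := by
        rw [Fintype.card_piFinset]
        rw [← Finset.prod_subset (Finset.subset_univ R)
          (fun r _ hr => by simp [if_neg hr])]
        apply Finset.prod_congr rfl
        intro r hr
        rw [if_pos hr]
      calc ((Φ.filter (fun φ => κ φ = ψ)).card : ℝ)
          ≤ ((∏ r ∈ R, (F.filter (fun A => B r ⊆ A)).card : ℕ) : ℝ) := by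
            exact_mod_cast hGcard ▸ hinj
      _ = ∏ r ∈ R, ((F.filter (fun A => B r ⊆ A)).card : ℝ) := by push_cast; rfl
      _ ≤ ∏ r ∈ R, q ^ (d - (B r).card) :=
          Finset.prod_le_prod (fun r _ => Nat.cast_nonneg _)
            (fun r hr => hcover (B r) ⟨r, hBne r hr⟩ (hBcd r hr))
      _ = q ^ (∑ r ∈ R, (d - (B r).card)) := Finset.prod_pow_eq_pow_sum R _ q
      _ = q ^ (m*d - S.card) := by
          congr 1
          have hsum : ∑ r ∈ R, (d - (B r).card) + ∑ r ∈ R, (B r).card = m * d := by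
            rw [← Finset.sum_add_distrib,
              Finset.sum_congr rfl (fun r hr => Nat.sub_add_cancel (hBcd r hr)),
              Finset.sum_const, smul_eq_mul]
          omega
    -- combine
    calc ∑ φ ∈ Φ.filter (fun φ => κ φ = ψ), ((1:ℝ)/2) ^ ((S.biUnion φ \ S).card)
        ≤ ∑ φ ∈ Φ.filter (fun φ => κ φ = ψ), (2:ℝ) ^ (d^3) / q ^ (m*d) :=
          Finset.sum_le_sum hterm
    _ = ((Φ.filter (fun φ => κ φ = ψ)).card : ℝ) * (2 ^ (d^3) / q ^ (m*d)) := by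
        rw [Finset.sum_const, nsmul_eq_mul]
    _ ≤ q ^ (m*d - S.card) * (2 ^ (d^3) / q ^ (m*d)) :=
        mul_le_mul_of_nonneg_right hfc
          (div_nonneg (by positivity) (le_of_lt (pow_pos hqpos _)))
    _ = 2 ^ (d^3) * (L / n) ^ S.card := by
        have hSmd : S.card ≤ m * d := le_trans hSd (Nat.le_mul_of_pos_left d hm1)
        have hqe : q ^ (m*d) = q ^ (m*d - S.card) * q ^ S.card := by
          rw [← pow_add, Nat.sub_add_cancel hSmd]
        have hLn : L / (n:ℝ) = q⁻¹ := by rw [hqdef, inv_div]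
        rw [hLn, inv_pow, hqe]
        have hq1 : q ^ (m*d - S.card) ≠ 0 := pow_ne_zero _ (ne_of_gt hqpos)
        have hq2' : q ^ S.card ≠ 0 := pow_ne_zero _ (ne_of_gt hqpos)
        field_simp
  -- image cardinality bound
  have himg : ((Φ.image κ).card : ℝ) ≤ (d:ℝ) ^ d := by
    have h1 : (Φ.image κ).card ≤ S.card ^ S.card := by
      have hb : ∀ ψ ∈ Φ.image κ, (∀ i ∈ S, ψ i ∈ S) ∧ (∀ i, i ∉ S → ψ i = i) := by
        intro ψ hψ
        obtain ⟨φ₀, hφ₀, rfl⟩ := Finset.mem_image.mp hψ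
        exact ⟨fun i hi => (hκS φ₀ i hi).1, fun i hi => hκfix φ₀ i hi⟩
      have := Finset.card_le_card_of_injOn
        (f := fun ψ => (fun i : {a // a ∈ S} =>
          if h : ψ (i:Fin n) ∈ S then (⟨ψ (i:Fin n), h⟩ : {a // a ∈ S}) else i))
        (s := Φ.image κ) (t := (Finset.univ : Finset ({a // a ∈ S} → {a // a ∈ S})))
        (fun ψ _ => Finset.mem_univ _) ?_
      · calc (Φ.image κ).card ≤ (Finset.univ : Finset ({a // a ∈ S} → {a // a ∈ S})).card := this
        _ = S.card ^ S.card := by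
            rw [Finset.card_univ, Fintype.card_fun, Fintype.card_coe]
      · intro ψ1 h1 ψ2 h2 he
        rw [Finset.mem_coe] at h1 h2
        obtain ⟨hS1, hfix1⟩ := hb ψ1 h1
        obtain ⟨hS2, hfix2⟩ := hb ψ2 h2
        funext i
        by_cases hi : i ∈ S
        · have hev := congrFun he ⟨i, hi⟩
          simp only [dif_pos (hS1 i hi), dif_pos (hS2 i hi)] at hev
          exact congrArg Subtype.val hev
        · rw [hfix1 i hi, hfix2 i hi]
    calc ((Φ.image κ).card : ℝ) ≤ ((S.card ^ S.card : ℕ) : ℝ) := by exact_mod_cast h1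
    _ ≤ ((d ^ d : ℕ) : ℝ) := by
        have : S.card ^ S.card ≤ d ^ d :=
          le_trans (Nat.pow_le_pow_left hSd _) (Nat.pow_le_pow_right (by omega) hSd)
        exact_mod_cast this
    _ = (d:ℝ) ^ d := by push_cast; rfl
  -- final assembly
  have hLn0 : (0:ℝ) ≤ L / n := le_of_lt (div_pos hLpos hnpos)
  calc JInf H S ≤ ∑ φ ∈ Φ, ((1:ℝ)/2) ^ ((S.biUnion φ \ S).card) := hstep2
  _ = ∑ ψ ∈ Φ.image κ, ∑ φ ∈ Φ.filter (fun φ => κ φ = ψ),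
        ((1:ℝ)/2) ^ ((S.biUnion φ \ S).card) := hdecomp
  _ ≤ ∑ ψ ∈ Φ.image κ, (2:ℝ) ^ (d^3) * (L / n) ^ S.card := Finset.sum_le_sum hfiber
  _ = ((Φ.image κ).card : ℝ) * (2 ^ (d^3) * (L / n) ^ S.card) := by
      rw [Finset.sum_const, nsmul_eq_mul]
  _ ≤ (d:ℝ) ^ d * (2 ^ (d^3) * (L / n) ^ S.card) :=
      mul_le_mul_of_nonneg_right himg
        (mul_nonneg (by positivity) (pow_nonneg hLn0 _))
  _ = (d:ℝ) ^ d * 2 ^ (d^3) * (L / n) ^ S.card := by ring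
end
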